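/- For every n × n doubly stochastic matrix D, the minimal radius r_F(D) = max_{D' ∈ Ω_n} ‖D − D'‖_F of a bounding ball of Ω_n centered at D relative to the Frobenius norm satisfies n − 1 ≤ r_F(D)² ≤ 2n. -/

import Mathlib

open Matrix BigOperators

/-- The matrix `J_n` with all entries equal to `1/n`. -/
noncomputable def matJ (n : ℕ) : Matrix (Fin n) (Fin n) ℝ :=
  Matrix.of fun _ _ => (n : ℝ)⁻¹

/-- The singular values of a real square matrix: the square roots of the
eigenvalues of `Aᴴ * A` (`Aᴴ = Aᵀ` over `ℝ`). -/
noncomputable def singularValues {n : ℕ} (A : Matrix (Fin n) (Fin n) ℝ) : Fin n → ℝ :=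
  fun i => Real.sqrt ((show (Aᵀ * A).IsHermitian by
    simpa using Matrix.isHermitian_conjTranspose_mul_self A).eigenvalues i)

/-- The Schatten `p`-norm of a real square matrix. -/
noncomputable def schattenNorm {n : ℕ} (p : ℝ) (A : Matrix (Fin n) (Fin n) ℝ) : ℝ :=
  (∑ i, singularValues A i ^ p) ^ (1 / p)

/-- The Frobenius norm of a real square matrix. -/
noncomputable def frobNorm {n : ℕ} (A : Matrix (Fin n) (Fin n) ℝ) : ℝ :=
  Real.sqrt (∑ i, ∑ j, (A i j) ^ 2)

/-- The minimal trace of a square matrix: the minimum over all permutations `σ`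
of `∑ i, A i (σ i)`. -/
noncomputable def trMin {n : ℕ} (A : Matrix (Fin n) (Fin n) ℝ) : ℝ :=
  ⨅ σ : Equiv.Perm (Fin n), ∑ i, A i (σ i)

/-- A matrix is a permutation matrix if it is the matrix of some permutation. -/
def IsPermMatrix {n : ℕ} (P : Matrix (Fin n) (Fin n) ℝ) : Prop :=
  ∃ σ : Equiv.Perm (Fin n), P = σ.permMatrix ℝ

/-!
Entries of a doubly stochastic matrix lie in `[0, 1]`, so `d² ≤ d` and `(d - d')² ≤ d² + d'²`;
summing gives `‖D - D'‖² ≤ n + n`. For the lower bound, the `n` cyclic shifts `j = i + k`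
partition the entries of `D`, so some permutation `σ` has `∑ D i (σ i) ≤ 1`, while Cauchy–Schwarz
on each row gives `‖D‖² ≥ 1`; hence `‖D - P_σ‖² = ‖D‖² - 2 ∑ D i (σ i) + n ≥ n - 1`.
-/

open Finset

section DoublyStochastic

variable {R ι : Type*} [CommRing R] [Fintype ι] [DecidableEq ι] {D D' : Matrix ι ι R}

lemma sum_sq_sub_permMatrix (D : Matrix ι ι R) (σ : Equiv.Perm ι) :
    ∑ i, ∑ j, (D - σ.permMatrix R) i j ^ 2 =
      ∑ i, ∑ j, D i j ^ 2 - 2 * ∑ i, D i (σ i) + Fintype.card ι := by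
  have hrow (i : ι) :
      ∑ j, (D - σ.permMatrix R) i j ^ 2 = ∑ j, D i j ^ 2 - 2 * D i (σ i) + 1 := by
    have hentry (j : ι) : (D - σ.permMatrix R) i j ^ 2 =
        D i j ^ 2 - 2 * (if σ i = j then D i j else 0) + (if σ i = j then 1 else 0) := by
      by_cases h : σ i = j <;> simp [h, PEquiv.toMatrix_apply]; ring
    simp only [hentry, sum_add_distrib, sum_sub_distrib, ← mul_sum, sum_ite_eq, mem_univ, if_true]
  simp only [hrow, sum_add_distrib, sum_sub_distrib, ← mul_sum, sum_const, card_univ, nsmul_one]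

variable [LinearOrder R] [IsStrictOrderedRing R]

lemma sum_sq_le_card_of_mem_doublyStochastic (hD : D ∈ doublyStochastic R ι) :
    ∑ i, ∑ j, D i j ^ 2 ≤ Fintype.card ι := by
  calc ∑ i, ∑ j, D i j ^ 2 ≤ ∑ i, ∑ j, D i j := by
        gcongr with i _ j _
        exact pow_le_of_le_one (nonneg_of_mem_doublyStochastic hD)
          (le_one_of_mem_doublyStochastic hD) two_ne_zero
    _ = Fintype.card ι := by simp [sum_row_of_mem_doublyStochastic hD]

lemma one_le_sum_sq_of_mem_doublyStochastic [Nonempty ι] (hD : D ∈ doublyStochastic R ι) :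
    1 ≤ ∑ i, ∑ j, D i j ^ 2 := by
  have hrow (i : ι) : 1 ≤ Fintype.card ι * ∑ j, D i j ^ 2 := by
    simpa [sum_row_of_mem_doublyStochastic hD] using
      sq_sum_le_card_mul_sum_sq (s := univ) (f := D i)
  have hcard : (Fintype.card ι : R) * 1 ≤ Fintype.card ι * ∑ i, ∑ j, D i j ^ 2 := by
    simpa [mul_sum] using sum_le_sum fun i (_ : i ∈ univ) => hrow i
  exact le_of_mul_le_mul_left hcard (by exact_mod_cast Fintype.card_pos)

lemma sum_sq_sub_le_two_mul_card (hD : D ∈ doublyStochastic R ι)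
    (hD' : D' ∈ doublyStochastic R ι) :
    ∑ i, ∑ j, (D - D') i j ^ 2 ≤ 2 * Fintype.card ι := by
  have hentry (i j : ι) : (D - D') i j ^ 2 ≤ D i j ^ 2 + D' i j ^ 2 := by
    have := mul_nonneg (nonneg_of_mem_doublyStochastic hD (i := i) (j := j))
      (nonneg_of_mem_doublyStochastic hD' (i := i) (j := j))
    rw [Matrix.sub_apply]
    nlinarith
  calc ∑ i, ∑ j, (D - D') i j ^ 2 ≤ ∑ i, ∑ j, (D i j ^ 2 + D' i j ^ 2) := by
        gcongr with i _ j _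
        exact hentry i j
    _ = ∑ i, ∑ j, D i j ^ 2 + ∑ i, ∑ j, D' i j ^ 2 := by simp only [sum_add_distrib]
    _ ≤ 2 * Fintype.card ι := by
        linarith [sum_sq_le_card_of_mem_doublyStochastic hD,
          sum_sq_le_card_of_mem_doublyStochastic hD']

lemma exists_sum_apply_add_le_one [AddGroup ι] (hD : D ∈ doublyStochastic R ι) :
    ∃ k : ι, ∑ i, D i (i + k) ≤ 1 := by
  have htotal : ∑ k, ∑ i, D i (i + k) = ∑ _k : ι, (1 : R) := by
    rw [sum_comm]
    refine sum_congr rfl fun i _ => ?_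
    exact (Equiv.sum_comp (Equiv.addLeft i) (D i)).trans (sum_row_of_mem_doublyStochastic hD i)
  obtain ⟨k, -, hk⟩ := exists_le_of_sum_le univ_nonempty htotal.le
  exact ⟨k, hk⟩

lemma exists_perm_sum_apply_le_one [Nonempty ι] (hD : D ∈ doublyStochastic R ι) :
    ∃ σ : Equiv.Perm ι, ∑ i, D i (σ i) ≤ 1 := by
  have : NeZero (Fintype.card ι) := ⟨Fintype.card_ne_zero⟩
  let : AddGroup ι := (Fintype.equivFin ι).addGroup
  obtain ⟨k, hk⟩ := exists_sum_apply_add_le_one hD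
  exact ⟨Equiv.addRight k, hk⟩

lemma exists_mem_doublyStochastic_card_sub_one_le_sum_sq_sub [Nonempty ι]
    (hD : D ∈ doublyStochastic R ι) :
    ∃ D' ∈ doublyStochastic R ι, (Fintype.card ι : R) - 1 ≤ ∑ i, ∑ j, (D - D') i j ^ 2 := by
  obtain ⟨σ, hσ⟩ := exists_perm_sum_apply_le_one hD
  refine ⟨σ.permMatrix R, permMatrix_mem_doublyStochastic, ?_⟩
  rw [sum_sq_sub_permMatrix]
  linarith [one_le_sum_sq_of_mem_doublyStochastic hD]

end DoublyStochastic

lemma frobNorm_nonneg {n : ℕ} (A : Matrix (Fin n) (Fin n) ℝ) : 0 ≤ frobNorm A :=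
  Real.sqrt_nonneg _

lemma frobNorm_sq {n : ℕ} (A : Matrix (Fin n) (Fin n) ℝ) :
    frobNorm A ^ 2 = ∑ i, ∑ j, A i j ^ 2 :=
  Real.sq_sqrt (by positivity)

section SupOfSquares

variable {S : Set ℝ} {c x : ℝ}

lemma Real.sSup_sq_le (hne : S.Nonempty) (hS : ∀ y ∈ S, 0 ≤ y) (hc : ∀ y ∈ S, y ^ 2 ≤ c) :
    sSup S ^ 2 ≤ c := by
  obtain ⟨y, hy⟩ := hne
  have hc0 : 0 ≤ c := (sq_nonneg y).trans (hc y hy)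
  have hsup : sSup S ≤ √c := csSup_le ⟨y, hy⟩ fun z hz => Real.le_sqrt_of_sq_le (hc z hz)
  exact (Real.le_sqrt (Real.sSup_nonneg hS) hc0).mp hsup

lemma Real.sq_le_sSup_sq (hc : ∀ y ∈ S, y ^ 2 ≤ c) (hx : x ∈ S) (hx0 : 0 ≤ x) :
    x ^ 2 ≤ sSup S ^ 2 :=
  pow_le_pow_left₀ hx0
    (le_csSup ⟨√c, fun y hy => Real.le_sqrt_of_sq_le (hc y hy)⟩ hx) 2

end SupOfSquares

/-- For `D` doubly stochastic, with
`r_F(D) = max_{D' ∈ Ω_n} ‖D − D'‖_F`, one has `n − 1 ≤ r_F(D)² ≤ 2n`. -/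
theorem frob_bounding_radius_sq_bounds {n : ℕ} (D : Matrix (Fin n) (Fin n) ℝ)
    (hD : D ∈ doublyStochastic ℝ (Fin n)) :
    (n : ℝ) - 1 ≤
        sSup {r : ℝ | ∃ D' ∈ doublyStochastic ℝ (Fin n), r = frobNorm (D - D')} ^ 2 ∧
      sSup {r : ℝ | ∃ D' ∈ doublyStochastic ℝ (Fin n), r = frobNorm (D - D')} ^ 2 ≤
        2 * n := by
  set S := {r : ℝ | ∃ D' ∈ doublyStochastic ℝ (Fin n), r = frobNorm (D - D')}
  have hS_nonneg : ∀ r ∈ S, 0 ≤ r := by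
    rintro _ ⟨D', -, rfl⟩
    exact frobNorm_nonneg _
  have hS_sq_le : ∀ r ∈ S, r ^ 2 ≤ 2 * n := by
    rintro _ ⟨D', hD', rfl⟩
    simpa [frobNorm_sq] using sum_sq_sub_le_two_mul_card hD hD'
  refine ⟨?_, Real.sSup_sq_le ⟨_, D, hD, rfl⟩ hS_nonneg hS_sq_le⟩
  rcases Nat.eq_zero_or_pos n with rfl | hn
  · linarith [sq_nonneg (sSup S), (Nat.cast_zero : ((0 : ℕ) : ℝ) = 0)]
  have : Nonempty (Fin n) := Fin.pos_iff_nonempty.mp hn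
  obtain ⟨D', hD', hfar⟩ := exists_mem_doublyStochastic_card_sub_one_le_sum_sq_sub hD
  calc (n : ℝ) - 1 ≤ frobNorm (D - D') ^ 2 := by simpa [frobNorm_sq] using hfar
    _ ≤ sSup S ^ 2 := Real.sq_le_sSup_sq hS_sq_le ⟨D', hD', rfl⟩ (frobNorm_nonneg _)
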